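/- Let n ≥ 10, let r ≥ 1, μ0 ≥ 2 be such that K := n/(μ0 r) and n/2 are integers, and suppose (1/12) · μ0 r log n / n ≥ 1. Then there exists a finite family L of n/2 symmetric rank-r matrices in R^{n×n}, each satisfying the standard incoherence condition with parameter μ0, with the following property. Let L* be drawn uniformly from L, let S* be a symmetric random matrix where, independently for each pair (i,j) with i ≤ j, S*_{ij} = S*_{ji} equals −1 with probability 1/3 and 0 otherwise if L*_{ij} = 1, and equals +1 with probability 1/3 and 0 otherwise if L*_{ij} = 0, and let A := L* + S*. Then for every (measurable) estimator L̂ of L* based on A, sup_{L* ∈ L} P(L̂(A) ≠ L*) ≥ 1/2, where the probability is over the randomness of S*. -/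

import Mathlib

open MeasureTheory Matrix

noncomputable section

/-- Frobenius norm of a real matrix. -/
def frobNorm {m n : ℕ} (X : Matrix (Fin m) (Fin n) ℝ) : ℝ :=
  Real.sqrt (∑ i, ∑ j, (X i j) ^ 2)

/-- Nuclear norm: sum of singular values (square roots of eigenvalues of XᵀX). -/
def nuclearNorm {m n : ℕ} (X : Matrix (Fin m) (Fin n) ℝ) : ℝ :=
  ∑ i, Real.sqrt ((show (Xᵀ * X).IsHermitian by
    rw [Matrix.IsHermitian, Matrix.conjTranspose_eq_transpose_of_trivial]
    rw [Matrix.transpose_mul, Matrix.transpose_transpose]).eigenvalues i)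

/-- Spectral norm: operator norm of the associated Euclidean linear map. -/
def specNorm {m n : ℕ} (X : Matrix (Fin m) (Fin n) ℝ) : ℝ :=
  ‖(Matrix.toEuclideanLin X).toContinuousLinearMap‖

/-- Entrywise ℓ∞ norm. -/
def linf {m n : ℕ} (X : Matrix (Fin m) (Fin n) ℝ) : ℝ := ⨆ i, ⨆ j, |X i j|

/-- ℓ∞,2 norm: maximum of the largest row and column ℓ₂ norms. -/
def linf2 {n : ℕ} (X : Matrix (Fin n) (Fin n) ℝ) : ℝ :=
  max (⨆ i, Real.sqrt (∑ j, (X i j) ^ 2)) (⨆ j, Real.sqrt (∑ i, (X i j) ^ 2))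

/-- Operator norm (w.r.t. the Frobenius norm) of a map on n×n matrices. -/
def opNormMap {n : ℕ} (A : Matrix (Fin n) (Fin n) ℝ → Matrix (Fin n) (Fin n) ℝ) : ℝ :=
  ⨆ Z : {Z : Matrix (Fin n) (Fin n) ℝ // frobNorm Z ≤ 1}, frobNorm (A Z.1)

/-- P_Ω for a Boolean sample ω. -/
def projB {n : ℕ} (ω : Fin n × Fin n → Bool) (Z : Matrix (Fin n) (Fin n) ℝ) :
    Matrix (Fin n) (Fin n) ℝ := fun i j => if ω (i, j) then Z i j else 0

open Classical in
/-- P_Ω for a set Ω of indices. -/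
def projS {n : ℕ} (Ω : Set (Fin n × Fin n)) (Z : Matrix (Fin n) (Fin n) ℝ) :
    Matrix (Fin n) (Fin n) ℝ := fun i j => if (i, j) ∈ Ω then Z i j else 0

/-- The tangent-space projection P_T determined by U and V. -/
def projT {n r : ℕ} (U V : Matrix (Fin n) (Fin r) ℝ) (Z : Matrix (Fin n) (Fin n) ℝ) :
    Matrix (Fin n) (Fin n) ℝ :=
  U * Uᵀ * Z + Z * V * Vᵀ - U * Uᵀ * Z * V * Vᵀ

/-- Bernoulli(p) measure on Bool. -/
def bern (p : ℝ) : Measure Bool :=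
  ENNReal.ofReal p • Measure.dirac true + ENNReal.ofReal (1 - p) • Measure.dirac false

/-- Product Bernoulli(p) measure on index samples: each (i,j) observed independently
with probability p. -/
def sampleMeasure (n : ℕ) (p : ℝ) : Measure (Fin n × Fin n → Bool) :=
  Measure.pi fun _ => bern p

/-- ℓ₂ norm of the i-th row of U, i.e. ‖Uᵀ e_i‖₂. -/
def rowNorm {n r : ℕ} (U : Matrix (Fin n) (Fin r) ℝ) (i : Fin n) : ℝ :=
  Real.sqrt (∑ k, (U i k) ^ 2)

open Classical in
/-- The sparse noise matrix S*: for each pair (i,j) (symmetric via (min,max)),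
independently with probability 1/3 equal to −1 if L_{ij} = 1 and to +1 if
L_{ij} = 0, and equal to 0 otherwise. -/
def sPrime {n : ℕ} (L : Matrix (Fin n) (Fin n) ℝ) (ω : Fin n × Fin n → Bool) :
    Matrix (Fin n) (Fin n) ℝ := fun i j =>
  if ω (min i j, max i j) then (if L i j = 1 then -1 else 1) else 0

/-!
Write `n = 2M`. For `x < M` let `L x` be the indicator of `r` blocks of size `K = n / (μ0 r)`:
block 0 is `{x} ∪ B₀` and the other blocks, like `B₀`, lie in `[M, n)`. Every `L x` is the image of
a reference matrix `L⋆` (block 0 = `{z} ∪ B₀` with `z ≥ M`) under the transposition of `z` and `x`.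

For a symmetric 0/1 matrix, `L + sPrime L ω` is `L` with every entry whose symmetrized coin is
`true` toggled, so the observation under `L x` with coins `ω` equals the observation under `L⋆`
with `ω` toggled on the set where `L x` and `L⋆` differ. That set consists of the set `G` of ones
of `L⋆` in row or column `z` (at most `2K` of them) and its image under the swap. Toggling a
Bernoulli(1/3) coin multiplies its probability by 2 or 1/2; pairing each entry of `G` with its
image bounds the likelihood ratio of the toggle by `∏_{c ∈ G} (4 if ω c else 1)`, whose
expectation is `2^|G|`. Pulled back to observations under `L⋆`, the events "the estimator returns
`L x`" are disjoint for distinct `x`, so their probabilities sum to at most `4^K`. But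
`log n ≥ 12 K` gives `M > 2 · 4^K`, so some `x` is missed with probability at least `1/2`.
-/

open Finset Function
open scoped ENNReal

theorem MeasureTheory.Measure.map_le_withDensity_of_involutive {Ω : Type*} [MeasurableSpace Ω]
    [Countable Ω] [MeasurableSingletonClass Ω] {μ : Measure Ω} {f : Ω → Ω} (hf : Involutive f)
    {W : Ω → ℝ≥0∞} (h : ∀ ω, μ {f ω} ≤ W ω * μ {ω}) : μ.map f ≤ μ.withDensity W := by
  refine Measure.le_iff.2 fun s hs => ?_
  rw [← tsum_indicator_apply_singleton _ s hs, ← tsum_indicator_apply_singleton _ s hs]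
  refine ENNReal.tsum_le_tsum fun ω => Set.indicator_le_indicator ?_
  rw [Measure.map_apply .of_discrete (measurableSet_singleton ω),
    withDensity_apply _ (measurableSet_singleton ω), lintegral_singleton,
    show f ⁻¹' {ω} = {f ω} from Set.ext fun ψ => hf.eq_iff]
  exact h ω

theorem MeasureTheory.sum_measure_preimage_le_of_map_le {Ω Ω' ι : Type*} [MeasurableSpace Ω]
    [MeasurableSpace Ω'] [Fintype ι] {μ : Measure Ω} {ν : Measure Ω'} {f : ι → Ω → Ω'}
    {E : ι → Set Ω'} (hf : ∀ l, Measurable (f l)) (hE : ∀ l, MeasurableSet (E l))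
    (hdisj : Pairwise (Disjoint on E)) (hle : ∀ l, μ.map (f l) ≤ ν) :
    ∑ l, μ (f l ⁻¹' E l) ≤ ν Set.univ := by
  calc ∑ l, μ (f l ⁻¹' E l) = ∑ l, μ.map (f l) (E l) := by
        simp only [Measure.map_apply (hf _) (hE _)]
    _ ≤ ∑ l, ν (E l) := sum_le_sum fun l _ => hle l _
    _ = ν (⋃ l, E l) := by rw [measure_iUnion hdisj hE, tsum_fintype]
    _ ≤ ν Set.univ := measure_mono (Set.subset_univ _)

theorem MeasureTheory.lintegral_pi_prod {ι α : Type*} [Fintype ι] [DecidableEq ι] [Fintype α]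
    [MeasurableSpace α] [MeasurableSingletonClass α] (μ : ι → Measure α) [∀ i, SigmaFinite (μ i)]
    (g : ι → α → ℝ≥0∞) :
    ∫⁻ x, ∏ i, g i (x i) ∂Measure.pi μ = ∏ i, ∫⁻ a, g i a ∂μ i := by
  simp_rw [lintegral_fintype, Measure.pi_singleton, ← prod_mul_distrib]
  rw [prod_univ_sum, Fintype.piFinset_univ]

theorem MeasureTheory.half_le_iSup_measure_of_two_mul_sum_compl_lt {ι Ω : Type*} [Fintype ι]
    [MeasurableSpace Ω] {μ : Measure Ω} [IsProbabilityMeasure μ] {F : ι → Set Ω}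
    (hF : ∀ l, MeasurableSet (F l)) (h : 2 * ∑ l, μ (F l)ᶜ < Fintype.card ι) :
    1 / 2 ≤ ⨆ l, μ (F l) := by
  by_contra! hlt
  have hcompl : ∀ l, 1 / 2 ≤ μ (F l)ᶜ := fun l => by
    by_contra! hl
    have := ENNReal.add_lt_add ((le_iSup (fun l => μ (F l)) l).trans_lt hlt) hl
    rw [measure_add_measure_compl (hF l), ENNReal.add_halves, measure_univ] at this
    exact lt_irrefl _ this
  refine h.not_ge ?_
  calc (Fintype.card ι : ℝ≥0∞) = 2 * ∑ _l : ι, 1 / 2 := by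
        rw [sum_const, card_univ, nsmul_eq_mul, mul_left_comm, one_div,
          ENNReal.mul_inv_cancel two_ne_zero ENNReal.ofNat_ne_top, mul_one]
    _ ≤ 2 * ∑ l, μ (F l)ᶜ := by gcongr with l; exact hcompl l

section Bernoulli

instance isFiniteMeasure_bern (p : ℝ) : IsFiniteMeasure (bern p) := by
  constructor
  simp [bern, ENNReal.add_lt_top]

theorem isProbabilityMeasure_bern {p : ℝ} (h0 : 0 ≤ p) (h1 : p ≤ 1) :
    IsProbabilityMeasure (bern p) := by
  constructor
  simp [bern, ← ENNReal.ofReal_add h0 (sub_nonneg.2 h1)]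

theorem isProbabilityMeasure_sampleMeasure {n : ℕ} {p : ℝ} (h0 : 0 ≤ p) (h1 : p ≤ 1) :
    IsProbabilityMeasure (sampleMeasure n p) := by
  have := isProbabilityMeasure_bern h0 h1
  unfold sampleMeasure
  infer_instance

theorem bern_third_apply_singleton (b : Bool) :
    bern (1 / 3) {b} = (if b then 1 else 2) * 3⁻¹ := by
  cases b
  · simp only [bern, Measure.add_apply, Measure.smul_apply, Measure.dirac_apply, smul_eq_mul]
    rw [show (1 : ℝ) - 1 / 3 = 2 / 3 by norm_num, ENNReal.ofReal_div_of_pos (by norm_num)]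
    simp [div_eq_mul_inv]
  · simp [bern]

theorem bern_third_apply_not (b : Bool) :
    bern (1 / 3) {!b} = (if b then 2 else 2⁻¹) * bern (1 / 3) {b} := by
  cases b <;> simp only [bern_third_apply_singleton, Bool.not_false, Bool.not_true, if_true,
    Bool.false_eq_true, if_false]
  · rw [← mul_assoc, ENNReal.inv_mul_cancel two_ne_zero ENNReal.ofNat_ne_top]
  · ring

theorem lintegral_bern_third : ∫⁻ b, (if b then 4 else 1) ∂bern (1 / 3) = 2 := by
  rw [lintegral_fintype, Fintype.sum_bool]
  simp only [bern_third_apply_singleton, if_true, Bool.false_eq_true, if_false, one_mul]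
  rw [← add_mul, show (4 : ℝ≥0∞) + 2 = 2 * 3 by norm_num, mul_assoc,
    ENNReal.mul_inv_cancel (by norm_num) (by norm_num), mul_one]

end Bernoulli

section FlipWeight

variable {ι : Type*} [DecidableEq ι]

def flipOn (D : Finset ι) (ω : ι → Bool) : ι → Bool := fun c => ω c ^^ decide (c ∈ D)

theorem flipOn_involutive (D : Finset ι) : Involutive (flipOn D) := fun ω => by
  funext c
  simp [flipOn]

def flipWeight (G : Finset ι) (ω : ι → Bool) : ℝ≥0∞ := ∏ c ∈ G, if ω c then 4 else 1

theorem prod_flipRatio_union_map_le {G : Finset ι} {τ : ι ≃ ι}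
    (hdisj : Disjoint G (G.map τ.toEmbedding)) (ω : ι → Bool) :
    ∏ c ∈ G ∪ G.map τ.toEmbedding, (if ω c then (2 : ℝ≥0∞) else 2⁻¹) ≤ flipWeight G ω := by
  rw [prod_union hdisj, prod_map, ← prod_mul_distrib]
  refine prod_le_prod' fun c _ => ?_
  calc (if ω c then (2 : ℝ≥0∞) else 2⁻¹) * (if ω (τ c) then 2 else 2⁻¹)
      ≤ (if ω c then 2 else 2⁻¹) * 2 := by
        gcongr
        split_ifs
        exacts [le_rfl, (ENNReal.inv_le_one.2 one_le_two).trans one_le_two]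
    _ = if ω c then 4 else 1 := by
        split_ifs
        exacts [by norm_num, ENNReal.inv_mul_cancel two_ne_zero ENNReal.ofNat_ne_top]

variable [Fintype ι]

theorem pi_bern_third_flipOn_singleton (D : Finset ι) (ω : ι → Bool) :
    Measure.pi (fun _ : ι => bern (1 / 3)) {flipOn D ω} =
      (∏ c ∈ D, if ω c then 2 else 2⁻¹) * Measure.pi (fun _ : ι => bern (1 / 3)) {ω} := by
  have hc : ∀ c, bern (1 / 3) {flipOn D ω c} =
      (if c ∈ D then (if ω c then 2 else 2⁻¹) else 1) * bern (1 / 3) {ω c} := by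
    intro c
    by_cases h : c ∈ D <;> simp only [flipOn, h, decide_true, decide_false, Bool.xor_true,
      Bool.xor_false, bern_third_apply_not, if_true, if_false, one_mul]
  rw [Measure.pi_singleton, Measure.pi_singleton, prod_congr rfl fun c _ => hc c,
    prod_mul_distrib, prod_ite_mem, univ_inter]

theorem map_flipOn_le_withDensity_flipWeight {G : Finset ι} {τ : ι ≃ ι}
    (hdisj : Disjoint G (G.map τ.toEmbedding)) :
    (Measure.pi fun _ : ι => bern (1 / 3)).map (flipOn (G ∪ G.map τ.toEmbedding)) ≤
      (Measure.pi fun _ : ι => bern (1 / 3)).withDensity (flipWeight G) := by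
  refine Measure.map_le_withDensity_of_involutive (flipOn_involutive _) fun ω => ?_
  rw [pi_bern_third_flipOn_singleton]
  gcongr
  exact prod_flipRatio_union_map_le hdisj ω

theorem lintegral_flipWeight (G : Finset ι) :
    ∫⁻ ω, flipWeight G ω ∂Measure.pi (fun _ : ι => bern (1 / 3)) = 2 ^ #G := by
  have := isProbabilityMeasure_bern (p := 1 / 3) (by norm_num) (by norm_num)
  set g : ι → Bool → ℝ≥0∞ := fun c b => if c ∈ G then (if b then 4 else 1) else 1
  have hW : ∀ ω, flipWeight G ω = ∏ c, g c (ω c) := fun ω => by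
    simp only [g, flipWeight, prod_ite_mem, univ_inter]
  have hg : ∀ c, ∫⁻ b, g c b ∂bern (1 / 3) = if c ∈ G then 2 else 1 := fun c => by
    by_cases hc : c ∈ G
    · simp only [g, hc, if_true]
      exact lintegral_bern_third
    · simp only [g, hc, if_false, lintegral_const, measure_univ, mul_one]
  rw [lintegral_congr hW, lintegral_pi_prod _ g, prod_congr rfl fun c _ => hg c, prod_ite_mem,
    univ_inter, prod_const]

end FlipWeight

section Blocks

variable {ι κ m : Type*} [Fintype κ]

def block (e : ι × κ ↪ m) (k : ι) : Finset m := univ.map ((Embedding.sectR k κ).trans e)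

def SameBlock (e : ι × κ ↪ m) (i j : m) : Prop := ∃ k, i ∈ block e k ∧ j ∈ block e k

open Classical in
def blockIndicator (e : ι × κ ↪ m) : Matrix m m ℝ := fun i j => if SameBlock e i j then 1 else 0

open Classical in
def blockMembership (e : ι × κ ↪ m) : Matrix m ι ℝ := fun i k => if i ∈ block e k then 1 else 0

variable (e : ι × κ ↪ m)

theorem mem_block {k : ι} {i : m} : i ∈ block e k ↔ ∃ t, e (k, t) = i := by
  simp [block]

theorem apply_mem_block {k k' : ι} {t : κ} : e (k, t) ∈ block e k' ↔ k = k' := by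
  simp [mem_block, eq_comm (a := k)]

theorem card_block (k : ι) : #(block e k) = Fintype.card κ := by
  simp [block]

theorem sameBlock_apply_left {k : ι} {t : κ} {j : m} :
    SameBlock e (e (k, t)) j ↔ j ∈ block e k := by
  simp [SameBlock, apply_mem_block]

theorem not_sameBlock_of_notMem_range {i : m} (hi : i ∉ Set.range e) (j : m) :
    ¬ SameBlock e i j ∧ ¬ SameBlock e j i := by
  simp only [SameBlock, mem_block]
  constructor <;> rintro ⟨k, ⟨t, rfl⟩, ⟨t', rfl⟩⟩ <;> exact hi ⟨_, rfl⟩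

theorem sameBlock_comm {i j : m} : SameBlock e i j ↔ SameBlock e j i := by
  simp only [SameBlock, and_comm]

theorem sameBlock_trans_equiv (σ : m ≃ m) {i j : m} :
    SameBlock (e.trans σ.toEmbedding) i j ↔ SameBlock e (σ.symm i) (σ.symm j) := by
  simp [SameBlock, mem_block, Equiv.eq_symm_apply]

theorem blockIndicator_transpose : (blockIndicator e)ᵀ = blockIndicator e := by
  ext i j
  classical
  exact if_congr (sameBlock_comm e) rfl rfl

theorem blockIndicator_eq_zero_or_one (i j : m) :
    blockIndicator e i j = 0 ∨ blockIndicator e i j = 1 := by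
  unfold blockIndicator; split_ifs <;> simp

theorem blockIndicator_eq_one_iff {i j : m} : blockIndicator e i j = 1 ↔ SameBlock e i j := by
  unfold blockIndicator; split_ifs <;> simp [*]

theorem blockIndicator_eq_zero_of_notMem_range {x : m} (hx : x ∉ Set.range e) (j : m) :
    blockIndicator e x j = 0 ∧ blockIndicator e j x = 0 := by
  classical
  simp [blockIndicator, not_sameBlock_of_notMem_range e hx]

theorem card_filter_blockIndicator_eq_one_le [Fintype m] [DecidableEq m] (i : m) :
    #(univ.filter (blockIndicator e i · = 1)) ≤ Fintype.card κ := by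
  by_cases hi : i ∈ Set.range e
  · obtain ⟨⟨k, t⟩, rfl⟩ := hi
    calc _ ≤ #(block e k) := card_le_card fun j hj => by
          simpa [blockIndicator_eq_one_iff, sameBlock_apply_left] using hj
      _ = _ := card_block e k
  · simp [(blockIndicator_eq_zero_of_notMem_range e hi _).1]

theorem blockMembership_transpose_mul [Fintype m] [DecidableEq ι] :
    (blockMembership e)ᵀ * blockMembership e = (Fintype.card κ : ℝ) • 1 := by
  classical
  ext k k'
  simp only [Matrix.mul_apply, Matrix.transpose_apply, blockMembership, ite_mul, one_mul, zero_mul]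
  rw [Finset.sum_ite_mem, univ_inter, block, sum_map]
  simp [apply_mem_block, Matrix.one_apply]

variable [Fintype ι]

theorem blockMembership_mul_transpose :
    blockMembership e * (blockMembership e)ᵀ = blockIndicator e := by
  classical
  ext i j
  by_cases hi : i ∈ Set.range e
  · obtain ⟨⟨k, t⟩, rfl⟩ := hi
    simp only [Matrix.mul_apply, Matrix.transpose_apply, blockMembership, blockIndicator,
      apply_mem_block, sameBlock_apply_left, mul_ite, mul_one, mul_zero]
    rw [Fintype.sum_eq_single k fun k' hk' => by simp [Ne.symm hk']]
    simp
  · have hi' : ∀ k, i ∉ block e k := fun k h =>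
      hi (let ⟨t, ht⟩ := (mem_block e).1 h; ⟨_, ht⟩)
    simp [Matrix.mul_apply, blockMembership, blockIndicator, hi',
      not_sameBlock_of_notMem_range e hi]

theorem sum_blockMembership_sq_le (i : m) : ∑ k, blockMembership e i k ^ 2 ≤ 1 := by
  have hii := congrFun (congrFun (blockMembership_mul_transpose e) i) i
  simp only [Matrix.mul_apply, Matrix.transpose_apply, ← sq] at hii
  rw [hii]
  rcases blockIndicator_eq_zero_or_one e i i with h | h <;> norm_num [h]

theorem exists_orthonormal_factorization_blockIndicator [Nonempty κ] {n r : ℕ}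
    (e : Fin r × κ ↪ Fin n) :
    ∃ (U : Matrix (Fin n) (Fin r) ℝ) (S : Matrix (Fin r) (Fin r) ℝ),
      Uᵀ * U = 1 ∧ (∀ i j, i ≠ j → S i j = 0) ∧ (∀ i, 0 < S i i) ∧
      blockIndicator e = U * S * Uᵀ ∧ ∀ i, rowNorm U i ≤ Real.sqrt (Fintype.card κ : ℝ)⁻¹ := by
  set K : ℝ := (Fintype.card κ : ℝ)
  have hK : 0 < K := by simp [K, Fintype.card_pos]
  have hc : (Real.sqrt K)⁻¹ ^ 2 = K⁻¹ := by rw [inv_pow, Real.sq_sqrt hK.le]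
  refine ⟨(Real.sqrt K)⁻¹ • blockMembership e, K • 1, ?_, fun i j hij => by simp [hij],
    fun i => by simp [hK], ?_, fun i => ?_⟩
  · rw [Matrix.transpose_smul, Matrix.smul_mul, Matrix.mul_smul, blockMembership_transpose_mul,
      smul_smul, smul_smul, ← sq, hc, inv_mul_cancel₀ hK.ne', one_smul]
  · simp only [Matrix.transpose_smul, Matrix.smul_mul, Matrix.mul_smul, Matrix.mul_one, smul_smul,
      blockMembership_mul_transpose]
    rw [mul_left_comm, ← sq, hc, mul_inv_cancel₀ hK.ne', one_smul]
  · unfold rowNorm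
    gcongr
    simp only [Matrix.smul_apply, smul_eq_mul, mul_pow, ← Finset.mul_sum, hc]
    exact mul_le_of_le_one_right (by positivity) (sum_blockMembership_sq_le e i)

end Blocks

section SwapDifference

variable {m : Type*} [Fintype m] [DecidableEq m]

def crossOnes (P : Matrix m m ℝ) (z : m) : Finset (m × m) :=
  univ.filter fun c => P c.1 c.2 = 1 ∧ (c.1 = z ∨ c.2 = z)

variable {P : Matrix m m ℝ} {z x : m}

theorem swap_apply_eq_of_mem_crossOnes (hx : ∀ j, P x j = 0 ∧ P j x = 0) {c : m × m}
    (hc : c ∈ crossOnes P z) : P (Equiv.swap z x c.1) (Equiv.swap z x c.2) = 0 := by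
  obtain ⟨-, -, h | h⟩ := mem_filter.1 hc
  · simp [h, (hx _).1]
  · simp [h, (hx _).2]

theorem mem_crossOnes_of_ne_swap (hx : ∀ j, P x j = 0 ∧ P j x = 0) {c : m × m}
    (h1 : P c.1 c.2 = 1) (hne : P c.1 c.2 ≠ P (Equiv.swap z x c.1) (Equiv.swap z x c.2)) :
    c ∈ crossOnes P z := by
  have hx1 : c.1 ≠ x := fun h => by simp [h, (hx _).1] at h1
  have hx2 : c.2 ≠ x := fun h => by simp [h, (hx _).2] at h1
  refine mem_filter.2 ⟨mem_univ _, h1, ?_⟩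
  by_contra! hz
  exact hne (by rw [Equiv.swap_apply_of_ne_of_ne hz.1 hx1, Equiv.swap_apply_of_ne_of_ne hz.2 hx2])

theorem filter_ne_swap_eq (hP : ∀ i j, P i j = 0 ∨ P i j = 1)
    (hx : ∀ j, P x j = 0 ∧ P j x = 0) :
    univ.filter (fun c : m × m => P c.1 c.2 ≠ P (Equiv.swap z x c.1) (Equiv.swap z x c.2)) =
      crossOnes P z ∪
        (crossOnes P z).map (Equiv.prodCongr (Equiv.swap z x) (Equiv.swap z x)).toEmbedding := by
  ext c
  simp only [mem_filter, mem_univ, true_and, mem_union, mem_map_equiv, Equiv.prodCongr_symm,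
    Equiv.symm_swap, Equiv.prodCongr_apply]
  constructor
  · intro hne
    rcases hP c.1 c.2 with h0 | h1
    · refine Or.inr (mem_crossOnes_of_ne_swap hx ?_ ?_)
      · rcases hP (Equiv.swap z x c.1) (Equiv.swap z x c.2) with h | h
        · exact absurd (h0.trans h.symm) hne
        · exact h
      · simpa using hne.symm
    · exact Or.inl (mem_crossOnes_of_ne_swap hx h1 hne)
  · rintro (hc | hc)
    · rw [swap_apply_eq_of_mem_crossOnes hx hc, (mem_filter.1 hc).2.1]
      exact one_ne_zero
    · have hswap := swap_apply_eq_of_mem_crossOnes hx hc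
      have h1 := (mem_filter.1 hc).2.1
      simp only [Prod.map_fst, Prod.map_snd, Equiv.swap_apply_self] at hswap h1
      rw [hswap, h1]
      exact zero_ne_one

theorem disjoint_crossOnes_map_swap (hx : ∀ j, P x j = 0 ∧ P j x = 0) :
    Disjoint (crossOnes P z)
      ((crossOnes P z).map (Equiv.prodCongr (Equiv.swap z x) (Equiv.swap z x)).toEmbedding) := by
  rw [disjoint_left]
  intro c hc hc'
  simp only [mem_map_equiv, Equiv.prodCongr_symm, Equiv.symm_swap, Equiv.prodCongr_apply] at hc'
  have h1 := (mem_filter.1 hc').2.1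
  simp only [Prod.map_fst, Prod.map_snd] at h1
  rw [swap_apply_eq_of_mem_crossOnes hx hc] at h1
  exact zero_ne_one h1

theorem card_crossOnes_le (P : Matrix m m ℝ) (z : m) :
    #(crossOnes P z) ≤ #(univ.filter (P z · = 1)) + #(univ.filter (P · z = 1)) := by
  calc #(crossOnes P z)
      ≤ #({z} ×ˢ univ.filter (P z · = 1) ∪ univ.filter (P · z = 1) ×ˢ {z}) := by
        refine card_le_card fun c hc => ?_
        obtain ⟨-, h1, rfl | rfl⟩ := mem_filter.1 hc <;> simp [h1]
    _ ≤ _ := (card_union_le _ _).trans (by simp)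

end SwapDifference

theorem apply_min_max_of_transpose_eq {m : Type*} [LinearOrder m] {L : Matrix m m ℝ} (hL : Lᵀ = L)
    (i j : m) : L (min i j) (max i j) = L i j := by
  rcases le_total i j with h | h
  · rw [min_eq_left h, max_eq_right h]
  · rw [min_eq_right h, max_eq_left h, ← Matrix.transpose_apply L j i, hL]

theorem add_sPrime_flipOn {n : ℕ} {L L' : Matrix (Fin n) (Fin n) ℝ} (hL : Lᵀ = L) (hL' : L'ᵀ = L')
    (hb : ∀ i j, L i j = 0 ∨ L i j = 1) (hb' : ∀ i j, L' i j = 0 ∨ L' i j = 1)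
    (ω : Fin n × Fin n → Bool) :
    L + sPrime L (flipOn (univ.filter fun c => L c.1 c.2 ≠ L' c.1 c.2) ω) = L' + sPrime L' ω := by
  ext i j
  simp only [Matrix.add_apply, sPrime, flipOn, mem_filter, mem_univ, true_and,
    apply_min_max_of_transpose_eq hL, apply_min_max_of_transpose_eq hL']
  rcases hb i j with h | h <;> rcases hb' i j with h' | h' <;> cases ω (min i j, max i j) <;>
    norm_num [h, h']

section SwapFamily

variable {ι κ m : Type*} [Fintype κ] [DecidableEq m]

def swapFamily (e : ι × κ ↪ m) (z x : m) : Matrix m m ℝ :=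
  blockIndicator (e.trans (Equiv.swap z x).toEmbedding)

theorem swapFamily_transpose (e : ι × κ ↪ m) (z x : m) :
    (swapFamily e z x)ᵀ = swapFamily e z x :=
  blockIndicator_transpose _

theorem swapFamily_eq_zero_or_one (e : ι × κ ↪ m) (z x i j : m) :
    swapFamily e z x i j = 0 ∨ swapFamily e z x i j = 1 :=
  blockIndicator_eq_zero_or_one _ i j

theorem swapFamily_apply (e : ι × κ ↪ m) (z x i j : m) :
    swapFamily e z x i j = blockIndicator e (Equiv.swap z x i) (Equiv.swap z x j) := by
  classical
  simp only [swapFamily, blockIndicator]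
  exact if_congr (by rw [sameBlock_trans_equiv, Equiv.symm_swap]) rfl rfl

theorem swapFamily_ne {e : ι × κ ↪ m} {z x y : m} (hz : z ∈ Set.range e)
    (hx : x ∉ Set.range e) (hxy : x ≠ y) : swapFamily e z x ≠ swapFamily e z y := by
  intro h
  obtain ⟨⟨k, t⟩, rfl⟩ := hz
  have h1 : swapFamily e (e (k, t)) x x x = 1 := by
    rw [swapFamily_apply, Equiv.swap_apply_right, blockIndicator_eq_one_iff,
      sameBlock_apply_left, apply_mem_block]
  have hxz : x ≠ e (k, t) := fun h => hx ⟨_, h.symm⟩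
  rw [h, swapFamily_apply, Equiv.swap_apply_of_ne_of_ne hxz hxy,
    (blockIndicator_eq_zero_of_notMem_range e hx x).1] at h1
  exact zero_ne_one h1

variable [Fintype m]

theorem card_crossOnes_blockIndicator_le (e : ι × κ ↪ m) (z : m) :
    #(crossOnes (blockIndicator e) z) ≤ 2 * Fintype.card κ := by
  have hcol : univ.filter (blockIndicator e · z = 1) = univ.filter (blockIndicator e z · = 1) := by
    simp_rw [← Matrix.transpose_apply (blockIndicator e) z, blockIndicator_transpose]
  have := card_crossOnes_le (blockIndicator e) z
  rw [hcol] at this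
  linarith [card_filter_blockIndicator_eq_one_le e z]

theorem filter_blockIndicator_ne_swapFamily {e : ι × κ ↪ m} {z x : m} (hx : x ∉ Set.range e) :
    univ.filter (fun c : m × m => blockIndicator e c.1 c.2 ≠ swapFamily e z x c.1 c.2) =
      crossOnes (blockIndicator e) z ∪ (crossOnes (blockIndicator e) z).map
        (Equiv.prodCongr (Equiv.swap z x) (Equiv.swap z x)).toEmbedding := by
  simp only [swapFamily_apply]
  exact filter_ne_swap_eq (blockIndicator_eq_zero_or_one e)
    (blockIndicator_eq_zero_of_notMem_range e hx)

end SwapFamily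

theorem sum_sampleMeasure_swapFamily_success_le {ι κ ι' : Type*} [Fintype κ] [Fintype ι']
    {n : ℕ} (e : ι × κ ↪ Fin n) {z : Fin n} (hz : z ∈ Set.range e) {v : ι' → Fin n}
    (hv : Injective v) (hout : ∀ l, v l ∉ Set.range e)
    (Lhat : Matrix (Fin n) (Fin n) ℝ → Matrix (Fin n) (Fin n) ℝ) :
    ∑ l, sampleMeasure n (1 / 3) {ω | Lhat (swapFamily e z (v l) + sPrime (swapFamily e z (v l)) ω)
      = swapFamily e z (v l)} ≤ 4 ^ Fintype.card κ := by
  set G := crossOnes (blockIndicator e) z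
  set μ := sampleMeasure n (1 / 3)
  let D : ι' → Finset (Fin n × Fin n) := fun l =>
    univ.filter fun c => blockIndicator e c.1 c.2 ≠ swapFamily e z (v l) c.1 c.2
  let E : ι' → Set (Fin n × Fin n → Bool) := fun l =>
    {ψ | Lhat (blockIndicator e + sPrime (blockIndicator e) ψ) = swapFamily e z (v l)}
  have hpre : ∀ l, {ω | Lhat (swapFamily e z (v l) + sPrime (swapFamily e z (v l)) ω)
      = swapFamily e z (v l)} = flipOn (D l) ⁻¹' E l := fun l => by
    ext ω
    simp only [Set.mem_ofPred_eq, Set.mem_preimage, E, D]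
    rw [add_sPrime_flipOn (blockIndicator_transpose e) (swapFamily_transpose e z (v l))
      (blockIndicator_eq_zero_or_one e) (swapFamily_eq_zero_or_one e z (v l))]
  have hdisj : Pairwise (Disjoint on E) := fun l l' hll' => Set.disjoint_left.2 fun ψ h h' =>
    swapFamily_ne hz (hout l) (hv.ne hll') (h.symm.trans h')
  have hmap : ∀ l, μ.map (flipOn (D l)) ≤ μ.withDensity (flipWeight G) := fun l => by
    rw [show D l = _ from filter_blockIndicator_ne_swapFamily (hout l)]
    exact map_flipOn_le_withDensity_flipWeight
      (disjoint_crossOnes_map_swap (blockIndicator_eq_zero_of_notMem_range e (hout l)))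
  calc _ = ∑ l, μ (flipOn (D l) ⁻¹' E l) := by simp_rw [hpre]
    _ ≤ μ.withDensity (flipWeight G) Set.univ :=
        sum_measure_preimage_le_of_map_le (fun _ => .of_discrete) (fun _ => .of_discrete) hdisj hmap
    _ = 2 ^ #G := by
        rw [withDensity_apply _ MeasurableSet.univ, Measure.restrict_univ]
        exact lintegral_flipWeight G
    _ ≤ 2 ^ (2 * Fintype.card κ) :=
        pow_le_pow_right₀ one_le_two (card_crossOnes_blockIndicator_le e z)
    _ = 4 ^ Fintype.card κ := by rw [pow_mul]; norm_num

theorem four_pow_succ_lt_of_twelve_mul_le_log {K n : ℕ} (hK : 1 ≤ K)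
    (h : 12 * (K : ℝ) ≤ Real.log n) : 4 ^ (K + 1) < n := by
  have hK' : (1 : ℝ) ≤ K := by exact_mod_cast hK
  have hn : (0 : ℝ) < n := by
    rcases Nat.eq_zero_or_pos n with rfl | hn
    · simp only [CharP.cast_eq_zero, Real.log_zero] at h
      linarith
    · exact_mod_cast hn
  have h4 : (4 : ℝ) ≤ Real.exp 2 := by
    have := Real.add_one_le_exp 1
    rw [show (2 : ℝ) = 1 + 1 by norm_num, Real.exp_add]
    nlinarith
  have : (4 : ℝ) ^ (K + 1) < n := calc
    (4 : ℝ) ^ (K + 1) ≤ Real.exp 2 ^ (K + 1) := pow_le_pow_left₀ (by norm_num) h4 _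
    _ = Real.exp (2 * (K + 1)) := by rw [← Real.exp_nat_mul]; push_cast; ring_nf
    _ < Real.exp (12 * K) := Real.exp_lt_exp.2 (by linarith)
    _ ≤ n := by rw [← Real.exp_log hn]; exact Real.exp_le_exp.2 h
  exact_mod_cast this

theorem blockSize_bounds {n r K : ℕ} {μ0 : ℝ} (hn : 10 ≤ n) (hr : 1 ≤ r) (hμ : 2 ≤ μ0)
    (hK : (K : ℝ) = n / (μ0 * r)) (hcond : 1 ≤ (1 / 12) * (μ0 * r * Real.log n / n)) :
    1 ≤ K ∧ 2 * (r * K) ≤ n ∧ 4 ^ (K + 1) < n := by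
  have hn0 : (0 : ℝ) < n := by exact_mod_cast (by omega : 0 < n)
  have hr0 : (1 : ℝ) ≤ r := by exact_mod_cast hr
  have hμr : 0 < μ0 * r := by positivity
  have hKn : (K : ℝ) * (μ0 * r) = n := by rw [hK, div_mul_cancel₀ _ hμr.ne']
  have hK1 : 1 ≤ K := by
    rcases Nat.eq_zero_or_pos K with h0 | h0
    · rw [h0, Nat.cast_zero, zero_mul] at hKn
      linarith
    · exact h0
  have hlog : 12 * (K : ℝ) ≤ Real.log n := by
    have h12 : 12 * (K : ℝ) * (μ0 * r) ≤ Real.log n * (μ0 * r) := by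
      rw [mul_assoc, hKn]
      linarith [(le_div_iff₀ hn0).1 (by linarith : 12 ≤ μ0 * r * Real.log n / n)]
    exact le_of_mul_le_mul_right h12 hμr
  refine ⟨hK1, ?_, four_pow_succ_lt_of_twelve_mul_le_log hK1 hlog⟩
  have : (2 * (r * K) : ℝ) ≤ n := by rw [← hKn]; nlinarith [(Nat.cast_nonneg K : (0 : ℝ) ≤ K)]
  exact_mod_cast this

/-- Part 2 of Theorem 3: information-theoretic lower bound for
matrix decomposition. For n ≥ 10, r ≥ 1, μ0 ≥ 2 with n/(μ0 r) and n/2 integers,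
if (1/12)·μ0 r log n / n ≥ 1, there is a family of n/2 symmetric, binary, rank-r,
μ0-incoherent matrices such that every estimator of L* from A = L* + S* fails
with probability at least 1/2 for some member of the family. -/
theorem statement3 (n r : ℕ) (μ0 : ℝ) (hn : 10 ≤ n) (hr : 1 ≤ r) (hμ : 2 ≤ μ0)
    (hK : ∃ K : ℕ, (K : ℝ) = (n : ℝ) / (μ0 * r)) (h2 : 2 ∣ n)
    (hcond : 1 ≤ (1 / 12) * (μ0 * r * Real.log n / n)) :
    ∃ L : Fin (n / 2) → Matrix (Fin n) (Fin n) ℝ,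
      Function.Injective L ∧
      (∀ l, (L l)ᵀ = L l) ∧
      (∀ l i j, L l i j = 0 ∨ L l i j = 1) ∧
      (∀ l, ∃ (U : Matrix (Fin n) (Fin r) ℝ) (S : Matrix (Fin r) (Fin r) ℝ),
        Uᵀ * U = 1 ∧ (∀ i j, i ≠ j → S i j = 0) ∧ (∀ i, 0 < S i i) ∧
        L l = U * S * Uᵀ ∧ (∀ i, rowNorm U i ≤ Real.sqrt (μ0 * r / n))) ∧
      ∀ Lhat : Matrix (Fin n) (Fin n) ℝ → Matrix (Fin n) (Fin n) ℝ,
        (1 / 2 : ENNReal) ≤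
          ⨆ l, sampleMeasure n (1 / 3) {ω | Lhat (L l + sPrime (L l) ω) ≠ L l} := by
  obtain ⟨K, hKdef⟩ := hK
  obtain ⟨hK1, hrK, hbig⟩ := blockSize_bounds hn hr hμ hKdef hcond
  have : Nonempty (Fin K) := ⟨⟨0, hK1⟩⟩
  have := isProbabilityMeasure_sampleMeasure (n := n) (p := 1 / 3) (by norm_num) (by norm_num)
  let e : Fin r × Fin K ↪ Fin n := finProdFinEquiv.toEmbedding.trans
    ((Fin.natAddEmb (n / 2)).trans (Fin.castLEEmb (by omega)))
  let v : Fin (n / 2) ↪ Fin n := Fin.castLEEmb (by omega)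
  set z := e (⟨0, hr⟩, ⟨0, hK1⟩)
  have hout : ∀ l, v l ∉ Set.range e := by
    rintro l ⟨a, ha⟩
    have h := congrArg Fin.val ha
    change n / 2 + (finProdFinEquiv a : ℕ) = l at h
    omega
  refine ⟨fun l => swapFamily e z (v l), fun l l' h => ?_, fun l => swapFamily_transpose _ _ _,
    fun l => swapFamily_eq_zero_or_one _ _ _, fun l => ?_, fun Lhat => ?_⟩
  · by_contra hne
    exact swapFamily_ne ⟨_, rfl⟩ (hout l) (v.injective.ne hne) h
  · obtain ⟨U, S, hU, hS, hSpos, hL, hrow⟩ :=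
      exists_orthonormal_factorization_blockIndicator (e.trans (Equiv.swap z (v l)).toEmbedding)
    refine ⟨U, S, hU, hS, hSpos, hL, fun i => (hrow i).trans_eq ?_⟩
    rw [Fintype.card_fin, hKdef, inv_div]
  · apply half_le_iSup_measure_of_two_mul_sum_compl_lt fun _ => .of_discrete
    simp only [Set.compl_ofPred, not_not]
    calc _ ≤ (2 : ℝ≥0∞) * 4 ^ K := by
          gcongr
          simpa using sum_sampleMeasure_swapFamily_success_le e ⟨_, rfl⟩ v.injective hout Lhat
      _ < Fintype.card (Fin (n / 2)) := by
          rw [Fintype.card_fin, pow_succ] at *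
          exact_mod_cast (by omega : 2 * 4 ^ K < n / 2)
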